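/- arXiv:2202.02300 — 3 statements merged into one kernel-verified Lean document; each statement's English description precedes it below -/
import Mathlib

section
/- Under the balanced double linear feedback scheme (α = 1/2), for every stage k > 1, every admissible gain K ∈ (0, K_max] with K_max = min(1, 1/X_max), and every μ ≠ 0 with -1 < μ ≤ X_max, the expected cumulative gain-loss Ḡ(1/2, K, k) = (V_0/2)((1+Kμ)^k + (1-Kμ)^k - 2) is strictly positive. Moreover, if Kμ = 0 then Ḡ(1/2, K, k) = 0. -/
/-!
Write `f n = (y + x) ^ n + (y - x) ^ n`. Then
`f (n + 1) = y * f n + x * ((y + x) ^ n - (y - x) ^ n)`, and the last term is nonnegative because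
`|y - x| ≤ y + x` whenever `0 ≤ x, y`. Since `f 2 = 2 * y ^ 2 + 2 * x ^ 2`, induction gives
`2 * y ^ n < f n` for `n ≥ 2`, `x ≠ 0` and `y > 0`; the theorem is the case `y = 1`, `x = K * μ`.
-/

lemma sub_pow_le_add_pow {x y : ℝ} (hx : 0 ≤ x) (hy : 0 ≤ y) (n : ℕ) :
    (y - x) ^ n ≤ (y + x) ^ n :=
  calc (y - x) ^ n ≤ |y - x| ^ n := (le_abs_self _).trans (abs_pow _ _).le
    _ ≤ (y + x) ^ n :=
      pow_le_pow_left₀ (abs_nonneg _) (abs_sub_le_iff.2 ⟨by linarith, by linarith⟩) n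

lemma mul_add_pow_sub_sub_pow_nonneg (x : ℝ) {y : ℝ} (hy : 0 ≤ y) (n : ℕ) :
    0 ≤ x * ((y + x) ^ n - (y - x) ^ n) := by
  rcases le_total 0 x with hx | hx
  · exact mul_nonneg hx (sub_nonneg.2 (sub_pow_le_add_pow hx hy n))
  · have h := sub_pow_le_add_pow (neg_nonneg.2 hx) hy n
    rw [sub_neg_eq_add, ← sub_eq_add_neg] at h
    exact mul_nonneg_of_nonpos_of_nonpos hx (sub_nonpos.2 h)

lemma two_mul_pow_lt_add_pow_add_sub_pow {x y : ℝ} (hx : x ≠ 0) (hy : 0 < y) {n : ℕ}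
    (hn : 2 ≤ n) : 2 * y ^ n < (y + x) ^ n + (y - x) ^ n := by
  induction n, hn using Nat.le_induction with
  | base => nlinarith [sq_pos_of_ne_zero hx]
  | succ n _ ih =>
    calc 2 * y ^ (n + 1) = y * (2 * y ^ n) := by ring
      _ < y * ((y + x) ^ n + (y - x) ^ n) := mul_lt_mul_of_pos_left ih hy
      _ ≤ y * ((y + x) ^ n + (y - x) ^ n) + x * ((y + x) ^ n - (y - x) ^ n) :=
        le_add_of_nonneg_right (mul_add_pow_sub_sub_pow_nonneg x hy.le n)
      _ = (y + x) ^ (n + 1) + (y - x) ^ (n + 1) := by ring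

theorem stmt_2_general (V₀ Xmax μ K : ℝ) (hV₀ : 0 < V₀)
    (k : ℕ) (hk : 1 < k) :
    (K ∈ Set.Ioc 0 (min 1 (1 / Xmax)) → μ ≠ 0 → -1 < μ → μ ≤ Xmax →
      0 < V₀ / 2 * ((1 + K * μ) ^ k + (1 - K * μ) ^ k - 2)) ∧
    (K * μ = 0 → V₀ / 2 * ((1 + K * μ) ^ k + (1 - K * μ) ^ k - 2) = 0) := by
  constructor
  · rintro ⟨hK, -⟩ hμ - -
    have h := two_mul_pow_lt_add_pow_add_sub_pow (mul_ne_zero hK.ne' hμ) one_pos hk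
    rw [one_pow, mul_one] at h
    exact mul_pos (half_pos hV₀) (sub_pos.2 h)
  · intro h
    rw [h]
    norm_num

theorem stmt_2 (V₀ Xmax μ K : ℝ) (hV₀ : 0 < V₀) (hXmax : 0 < Xmax)
    (k : ℕ) (hk : 1 < k) :
    (K ∈ Set.Ioc 0 (min 1 (1 / Xmax)) → μ ≠ 0 → -1 < μ → μ ≤ Xmax →
      0 < V₀ / 2 * ((1 + K * μ) ^ k + (1 - K * μ) ^ k - 2)) ∧
    (K * μ = 0 → V₀ / 2 * ((1 + K * μ) ^ k + (1 - K * μ) ^ k - 2) = 0) :=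
  stmt_2_general V₀ Xmax μ K hV₀ k hk
end

section
/- Let K ∈ [0, min(1, 1/X_max)], μ ∈ (-1, X_max], σ² ≥ 0, and integer k ≥ 2. Then μ·[((1+Kμ)² + K²σ²)^{k-1} − ((1−Kμ)² + K²σ²)^{k-1}] ≥ μ·[((1+Kμ)²)^{k-1} − ((1−Kμ)²)^{k-1}]. -/
/-!
Since `x ↦ x ^ n` is convex on `[0, ∞)`, its increments `(x + c) ^ n - x ^ n` over a fixed step
`c ≥ 0` increase with `x ≥ 0`. The theorem applies this with `c = K²σ²` to the two points
`(1 ± Kμ)²`, whose difference `4Kμ` has the sign of `μ` because `K ≥ 0`.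
-/

section

variable {R : Type*} [CommRing R] [LinearOrder R] [IsStrictOrderedRing R]

theorem pow_sub_pow_le_add_pow_sub_add_pow (n : ℕ) {a b c : R} (hb : 0 ≤ b) (hba : b ≤ a)
    (hc : 0 ≤ c) : a ^ n - b ^ n ≤ (a + c) ^ n - (b + c) ^ n := by
  induction n with
  | zero => simp
  | succ n ih =>
    have ha_pow : b ^ n ≤ a ^ n := pow_le_pow_left₀ hb hba n
    have hb_pow : b ^ n ≤ (b + c) ^ n := pow_le_pow_left₀ hb (le_add_of_nonneg_right hc) n
    calc a ^ (n + 1) - b ^ (n + 1)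
        = a * (a ^ n - b ^ n) + (a - b) * b ^ n := by ring
      _ ≤ (a + c) * ((a + c) ^ n - (b + c) ^ n) + (a - b) * (b + c) ^ n :=
          add_le_add
            (mul_le_mul (le_add_of_nonneg_right hc) ih (sub_nonneg.2 ha_pow)
              (add_nonneg (hb.trans hba) hc))
            (mul_le_mul_of_nonneg_left hb_pow (sub_nonneg.2 hba))
      _ = (a + c) ^ (n + 1) - (b + c) ^ (n + 1) := by ring

theorem mul_pow_sub_pow_le_mul_add_pow_sub_add_pow (n : ℕ) {t a b c : R} (ha : 0 ≤ a)
    (hb : 0 ≤ b) (hc : 0 ≤ c) (hsign : 0 ≤ t * (a - b)) :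
    t * (a ^ n - b ^ n) ≤ t * ((a + c) ^ n - (b + c) ^ n) := by
  rcases lt_trichotomy t 0 with ht | rfl | ht
  · have hab : a ≤ b := sub_nonpos.1 (nonpos_of_mul_nonneg_right hsign ht)
    have h := pow_sub_pow_le_add_pow_sub_add_pow n ha hab hc
    rw [← neg_sub (b ^ n), ← neg_sub ((b + c) ^ n), mul_neg, mul_neg, neg_le_neg_iff]
    exact mul_le_mul_of_nonpos_left h ht.le
  · simp
  · have hba : b ≤ a := sub_nonneg.1 (nonneg_of_mul_nonneg_right hsign ht)
    exact mul_le_mul_of_nonneg_left (pow_sub_pow_le_add_pow_sub_add_pow n hb hba hc) ht.le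

end

theorem stmt_12_general (Xmax K μ σ2 : ℝ)
    (hK : K ∈ Set.Icc 0 (min 1 (1 / Xmax)))
    (hσ2 : 0 ≤ σ2) (k : ℕ) :
    μ * (((1 + K * μ) ^ 2) ^ (k - 1) - ((1 - K * μ) ^ 2) ^ (k - 1)) ≤
      μ * (((1 + K * μ) ^ 2 + K ^ 2 * σ2) ^ (k - 1) -
        ((1 - K * μ) ^ 2 + K ^ 2 * σ2) ^ (k - 1)) := by
  have hsign : 0 ≤ μ * ((1 + K * μ) ^ 2 - (1 - K * μ) ^ 2) :=
    calc 0 ≤ 4 * K * μ ^ 2 := mul_nonneg (mul_nonneg zero_le_four hK.1) (sq_nonneg μ)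
      _ = μ * ((1 + K * μ) ^ 2 - (1 - K * μ) ^ 2) := by ring
  exact mul_pow_sub_pow_le_mul_add_pow_sub_add_pow (k - 1) (sq_nonneg _) (sq_nonneg _)
    (by positivity) hsign

theorem stmt_12 (Xmax K μ σ2 : ℝ) (hXmax : 0 < Xmax)
    (hK : K ∈ Set.Icc 0 (min 1 (1 / Xmax))) (hμ : μ ∈ Set.Ioc (-1 : ℝ) Xmax)
    (hσ2 : 0 ≤ σ2) (k : ℕ) (hk : 2 ≤ k) :
    μ * (((1 + K * μ) ^ 2) ^ (k - 1) - ((1 - K * μ) ^ 2) ^ (k - 1)) ≤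
      μ * (((1 + K * μ) ^ 2 + K ^ 2 * σ2) ^ (k - 1) -
        ((1 - K * μ) ^ 2 + K ^ 2 * σ2) ^ (k - 1)) :=
  stmt_12_general Xmax K μ σ2 hK hσ2 k
end

section
/- Let X(0),...,X(k-1) be independent random variables with common mean μ and common variance σ², bounded in [X_min, X_max], K ∈ [0, min(1, 1/X_max)], α ∈ [0,1], V_0 > 0, and G = V_0(α∏_{j<k}(1+K X(j)) + (1−α)∏_{j<k}(1−K X(j)) − 1). Then Var(G) = α²V_0²((1+Kμ)² + K²σ²)^k + (1−α)²V_0²((1−Kμ)² + K²σ²)^k + 2α(1−α)V_0²(1 − K²(σ²+μ²))^k − 2αV_0²(1+Kμ)^k − 2(1−α)V_0²(1−Kμ)^k + V_0² − V_0²(α(1+Kμ)^k + (1−α)(1−Kμ)^k − 1)². -/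
/-!
Write `G = V₀ (α P + (1 - α) Q - 1)` with `P = ∏ⱼ (1 + K Xⱼ)` and `Q = ∏ⱼ (1 - K Xⱼ)`, so that
`Var G = V₀² (α² Var P + 2 α (1 - α) Cov(P, Q) + (1 - α)² Var Q)`. Every moment this involves
(`E P`, `E Q`, `E P²`, `E Q²`, `E PQ`) is the expectation of a product over `j` of a function of
`Xⱼ` alone, hence by independence the `k`-th power of a one-variable moment
`E[(a + b X)(c + d X)] = (a + b μ)(c + d μ) + b d σ²`.
-/

open MeasureTheory ProbabilityTheory

section

variable {Ω : Type*} [MeasurableSpace Ω] {P : Measure Ω}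

lemma integral_affine [IsProbabilityMeasure P] {X : Ω → ℝ} (hX : Integrable X P) (a b : ℝ) :
    ∫ ω, (a + b * X ω) ∂P = a + b * P[X] := by
  rw [integral_add (integrable_const a) (hX.const_mul b), integral_const_mul]
  simp

lemma integral_affine_mul_affine [IsProbabilityMeasure P] {X : Ω → ℝ} (hX : MemLp X 2 P)
    (a b c d : ℝ) :
    ∫ ω, (a + b * X ω) * (c + d * X ω) ∂P
      = (a + b * P[X]) * (c + d * P[X]) + b * d * Var[X; P] := by
  have hX1 : Integrable X P := hX.integrable one_le_two
  have hsq : Integrable (fun ω => X ω ^ 2) P := hX.integrable_sq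
  have hexpand : (fun ω => (a + b * X ω) * (c + d * X ω))
      = fun ω => (a * c + (a * d + b * c) * X ω) + b * d * X ω ^ 2 := by
    funext ω; ring
  have hlin : Integrable (fun ω => a * c + (a * d + b * c) * X ω) P :=
    (integrable_const _).add (hX1.const_mul _)
  rw [hexpand, integral_add hlin (hsq.const_mul _), integral_affine hX1, integral_const_mul,
    variance_eq_sub hX]
  simp only [Pi.pow_apply]
  ring

lemma ProbabilityTheory.iIndepFun.integral_fun_prod_comp_eq_pow {ι : Type*} [Fintype ι]
    {X : ι → Ω → ℝ} (hind : iIndepFun X P) (hmeas : ∀ i, Measurable (X i))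
    {f : ℝ → ℝ} (hf : Measurable f) {m : ℝ} (hm : ∀ i, ∫ ω, f (X i ω) ∂P = m) :
    ∫ ω, ∏ i, f (X i ω) ∂P = m ^ Fintype.card ι := by
  rw [hind.integral_fun_prod_comp (fun i => (hmeas i).aemeasurable)
    (fun _ => hf.aestronglyMeasurable), Finset.prod_congr rfl fun i _ => hm i,
    Finset.prod_const, Finset.card_univ]

lemma memLp_two_prod_of_memLp_top [IsFiniteMeasure P] {ι : Type*} [Fintype ι]
    {f : ι → Ω → ℝ} (hf : ∀ i, MemLp (f i) ⊤ P) :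
    MemLp (fun ω => ∏ i, f i ω) 2 P := by
  have := MemLp.prod' (s := Finset.univ) fun i _ => hf i
  simp only [ENNReal.inv_top, Finset.sum_const_zero, ENNReal.inv_zero] at this
  exact this.mono_exponent le_top

lemma variance_const_mul_add_mul_sub [IsProbabilityMeasure P] {Y Z : Ω → ℝ}
    (hY : MemLp Y 2 P) (hZ : MemLp Z 2 P) (v a b c : ℝ) :
    Var[fun ω => v * (a * Y ω + b * Z ω - c); P]
      = v ^ 2 * (a ^ 2 * Var[Y; P] + 2 * a * b * cov[Y, Z; P] + b ^ 2 * Var[Z; P]) := by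
  rw [variance_const_mul,
    variance_sub_const (X := fun ω => a * Y ω + b * Z ω)
      ((hY.const_mul a).add (hZ.const_mul b)).aestronglyMeasurable,
    variance_fun_add (hY.const_mul a) (hZ.const_mul b), variance_const_mul, variance_const_mul,
    covariance_const_mul_left, covariance_const_mul_right]
  ring

end

theorem stmt_17_general {Ω : Type*} [MeasureSpace Ω] [IsProbabilityMeasure (ℙ : Measure Ω)]
    (k : ℕ) (X : Fin k → Ω → ℝ) (μ σ Xmin Xmax K α V₀ : ℝ)
    (hmeas : ∀ j, Measurable (X j))
    (hind : iIndepFun X ℙ)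
    (hmean : ∀ j, ∫ ω, X j ω ∂ℙ = μ)
    (hvar : ∀ j, ∫ ω, (X j ω - μ) ^ 2 ∂ℙ = σ ^ 2)
    (hbdd : ∀ j, ∀ᵐ ω ∂ℙ, X j ω ∈ Set.Icc Xmin Xmax) :
    variance
      (fun ω => V₀ * (α * ∏ j, (1 + K * X j ω) + (1 - α) * ∏ j, (1 - K * X j ω) - 1)) ℙ
      = α ^ 2 * V₀ ^ 2 * ((1 + K * μ) ^ 2 + K ^ 2 * σ ^ 2) ^ k
        + (1 - α) ^ 2 * V₀ ^ 2 * ((1 - K * μ) ^ 2 + K ^ 2 * σ ^ 2) ^ k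
        + 2 * α * (1 - α) * V₀ ^ 2 * (1 - K ^ 2 * (σ ^ 2 + μ ^ 2)) ^ k
        - 2 * α * V₀ ^ 2 * (1 + K * μ) ^ k
        - 2 * (1 - α) * V₀ ^ 2 * (1 - K * μ) ^ k
        + V₀ ^ 2
        - V₀ ^ 2 * (α * (1 + K * μ) ^ k + (1 - α) * (1 - K * μ) ^ k - 1) ^ 2 := by
  have hbounded : ∀ j, MemLp (X j) ⊤ ℙ := fun j =>
    memLp_of_bounded (hbdd j) (hmeas j).aestronglyMeasurable ⊤
  have hL2 : ∀ j, MemLp (X j) 2 ℙ := fun j => (hbounded j).mono_exponent le_top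
  have hvariance : ∀ j, Var[X j; ℙ] = σ ^ 2 := fun j => by
    rw [variance_eq_integral (hmeas j).aemeasurable, hmean, hvar]
  have mean_prod : ∀ a b : ℝ, ∫ ω, ∏ j, (a + b * X j ω) ∂ℙ = (a + b * μ) ^ k :=
    fun a b => by
      simpa only [Fintype.card_fin] using
        hind.integral_fun_prod_comp_eq_pow hmeas (f := fun x => a + b * x) (by fun_prop)
        fun j => (integral_affine ((hL2 j).integrable one_le_two) a b).trans (by rw [hmean])
  have moment_prod : ∀ a b c d : ℝ, ∫ ω, ∏ j, (a + b * X j ω) * (c + d * X j ω) ∂ℙ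
      = ((a + b * μ) * (c + d * μ) + b * d * σ ^ 2) ^ k := fun a b c d => by
    simpa only [Fintype.card_fin] using hind.integral_fun_prod_comp_eq_pow hmeas
      (f := fun x => (a + b * x) * (c + d * x)) (by fun_prop)
      fun j => (integral_affine_mul_affine (hL2 j) a b c d).trans (by rw [hmean, hvariance])
  have hneg : ∀ x : ℝ, 1 - K * x = 1 + -K * x := fun x => by ring
  simp only [hneg]
  have hP : MemLp (fun ω => ∏ j, (1 + K * X j ω)) 2 ℙ :=
    memLp_two_prod_of_memLp_top fun j => (memLp_const (1 : ℝ)).add ((hbounded j).const_mul K)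
  have hQ : MemLp (fun ω => ∏ j, (1 + -K * X j ω)) 2 ℙ :=
    memLp_two_prod_of_memLp_top fun j => (memLp_const (1 : ℝ)).add ((hbounded j).const_mul (-K))
  rw [variance_const_mul_add_mul_sub hP hQ, variance_eq_sub hP, variance_eq_sub hQ,
    covariance_eq_sub hP hQ]
  simp only [Pi.pow_apply, Pi.mul_apply, sq, ← Finset.prod_mul_distrib, moment_prod, mean_prod]
  ring

theorem stmt_17 {Ω : Type*} [MeasureSpace Ω] [IsProbabilityMeasure (ℙ : Measure Ω)]
    (k : ℕ) (X : Fin k → Ω → ℝ) (μ σ Xmin Xmax K α V₀ : ℝ)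
    (hXmin : -1 < Xmin) (hXmin0 : Xmin < 0) (hXmax : 0 < Xmax)
    (hmeas : ∀ j, Measurable (X j))
    (hind : iIndepFun X ℙ)
    (hmean : ∀ j, ∫ ω, X j ω ∂ℙ = μ)
    (hvar : ∀ j, ∫ ω, (X j ω - μ) ^ 2 ∂ℙ = σ ^ 2)
    (hbdd : ∀ j, ∀ᵐ ω ∂ℙ, X j ω ∈ Set.Icc Xmin Xmax)
    (hK : K ∈ Set.Icc 0 (min 1 (1 / Xmax))) (hα : α ∈ Set.Icc (0 : ℝ) 1)
    (hV₀ : 0 < V₀) :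
    variance
      (fun ω => V₀ * (α * ∏ j, (1 + K * X j ω) + (1 - α) * ∏ j, (1 - K * X j ω) - 1)) ℙ
      = α ^ 2 * V₀ ^ 2 * ((1 + K * μ) ^ 2 + K ^ 2 * σ ^ 2) ^ k
        + (1 - α) ^ 2 * V₀ ^ 2 * ((1 - K * μ) ^ 2 + K ^ 2 * σ ^ 2) ^ k
        + 2 * α * (1 - α) * V₀ ^ 2 * (1 - K ^ 2 * (σ ^ 2 + μ ^ 2)) ^ k
        - 2 * α * V₀ ^ 2 * (1 + K * μ) ^ k
        - 2 * (1 - α) * V₀ ^ 2 * (1 - K * μ) ^ k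
        + V₀ ^ 2
        - V₀ ^ 2 * (α * (1 + K * μ) ^ k + (1 - α) * (1 - K * μ) ^ k - 1) ^ 2 :=
  stmt_17_general k X μ σ Xmin Xmax K α V₀ hmeas hind hmean hvar hbdd
end
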